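/- arXiv:1001.2893 — 2 statements merged into one kernel-verified Lean document; each statement's English description precedes it below -/
import Mathlib

section
/- Let ω = e^{2πi/3} and consider the ℂ-algebra homomorphism φ*: ℂ[x,z,y,w] → ℂ[X,Y,Z] determined by x ↦ XYZ, z ↦ X³+Y³+Z³, y ↦ (X³+ωY³+ω²Z³)(X³+ω²Y³+ωZ³), w ↦ (X³+ωY³+ω²Z³)³. Then the kernel of φ* is exactly the principal ideal generated by w² + y³ − 27wx³ − 3wyz + wz³. -/
/-!
Write ℂ[x,z,y,w] as ℂ[x,z,y][w]. The relation is monic quadratic in w, so modulo it every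
polynomial becomes a·w + b with a, b ∈ ℂ[x,z,y], and it suffices to see that φ*(a)·T + φ*(b) = 0
forces a = b = 0, where T = (X³+ωY³+ω²Z³)³ is the image of w. The images of x, z, y are invariant
under Y ↔ Z while T is not, so φ*(a) = φ*(b) = 0. Finally φ* is injective on ℂ[x,z,y] because
(X,Y,Z) ↦ (XYZ, X³+Y³+Z³, (X³+ωY³+ω²Z³)(X³+ω²Y³+ωZ³)) maps ℂ³ onto ℂ³: choose X³, Y³, Z³ with
prescribed elementary symmetric functions, then rescale one cube root to fix XYZ.
-/

noncomputable section
open MvPolynomial Complex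

/-- ω = e^{2πi/3}, a primitive cube root of unity. -/
def ω : ℂ := Complex.exp (2 * Real.pi * Complex.I / 3)

/-- the images of (x, z, y, w) under φ*: x ↦ XYZ, z ↦ X³+Y³+Z³,
y ↦ (X³+ωY³+ω²Z³)(X³+ω²Y³+ωZ³), w ↦ (X³+ωY³+ω²Z³)³.  Variables of ℂ[x,z,y,w] are
x = X 0, z = X 1, y = X 2, w = X 3. -/
def fvec : Fin 4 → MvPolynomial (Fin 3) ℂ :=
  ![X 0 * X 1 * X 2,
    X 0 ^ 3 + X 1 ^ 3 + X 2 ^ 3,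
    (X 0 ^ 3 + C ω * X 1 ^ 3 + C (ω ^ 2) * X 2 ^ 3) *
      (X 0 ^ 3 + C (ω ^ 2) * X 1 ^ 3 + C ω * X 2 ^ 3),
    (X 0 ^ 3 + C ω * X 1 ^ 3 + C (ω ^ 2) * X 2 ^ 3) ^ 3]

/-- w² + y³ − 27wx³ − 3wyz + wz³. -/
def Frel : MvPolynomial (Fin 4) ℂ :=
  X 3 ^ 2 + X 2 ^ 3 - C 27 * X 3 * X 0 ^ 3 - C 3 * X 3 * X 2 * X 1 + X 3 * X 1 ^ 3

section CubeRootOfUnity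

variable {R : Type*} [CommRing R] {t : R}

lemma mul_conj_eq_of_sq_add_self_add_one (ht : t ^ 2 + t + 1 = 0) (u v z : R) :
    (u + t * v + t ^ 2 * z) * (u + t ^ 2 * v + t * z) =
      u ^ 2 + v ^ 2 + z ^ 2 - u * v - u * z - v * z := by
  linear_combination (t * z ^ 2 - z ^ 2 + v * z - t * v * z + t ^ 2 * v * z - v ^ 2 + t * v ^ 2
    + u * z + u * v) * ht

lemma cube_sum_identity (ht : t ^ 2 + t + 1 = 0) (u v z : R) :
    (u + v + z) ^ 3 + (u + t * v + t ^ 2 * z) ^ 3 + (u + t ^ 2 * v + t * z) ^ 3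
      - 3 * (u + v + z) * ((u + t * v + t ^ 2 * z) * (u + t ^ 2 * v + t * z)) =
      27 * (u * v * z) := by
  set a := u + t * v + t ^ 2 * z
  set b := u + t ^ 2 * v + t * z
  set e := 2 * u - v - z
  have hsum : a + b = e := by linear_combination (v + z) * ht
  have hprod := mul_conj_eq_of_sq_add_self_add_one ht u v z
  -- `a³ + b³ = (a + b)³ - 3ab(a + b)` turns the claim into an identity in `u, v, z` alone.
  linear_combination ((a + b) ^ 2 + (a + b) * e + e ^ 2
      - 3 * (u ^ 2 + v ^ 2 + z ^ 2 - u * v - u * z - v * z)) * hsum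
    - 3 * (a + b + (u + v + z)) * hprod

end CubeRootOfUnity

section IsAlgClosed

variable {k : Type*} [Field k] [IsAlgClosed k]

lemma IsAlgClosed.exists_esymm_eq (s₁ s₂ s₃ : k) :
    ∃ u v t : k, u + v + t = s₁ ∧ u * v + u * t + v * t = s₂ ∧ u * v * t = s₃ := by
  obtain ⟨u, hu⟩ := IsAlgClosed.exists_root (Polynomial.X ^ 3 - Polynomial.C s₁ * Polynomial.X ^ 2
    + Polynomial.C s₂ * Polynomial.X - Polynomial.C s₃)
    (ne_of_eq_of_ne (b := 3) (by compute_degree!) (by decide))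
  obtain ⟨v, hv⟩ := IsAlgClosed.exists_root (Polynomial.X ^ 2 - Polynomial.C (s₁ - u) * Polynomial.X
    + Polynomial.C (s₂ - u * (s₁ - u)))
    (ne_of_eq_of_ne (b := 2) (by compute_degree!) (by decide))
  simp only [Polynomial.IsRoot, Polynomial.eval_add, Polynomial.eval_sub, Polynomial.eval_mul,
    Polynomial.eval_pow, Polynomial.eval_C, Polynomial.eval_X] at hu hv
  refine ⟨u, v, s₁ - u - v, by ring, by linear_combination -hv, by linear_combination hu - u * hv⟩

lemma IsAlgClosed.exists_cube_roots_mul_eq {u v t a : k} (h : u * v * t = a ^ 3) :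
    ∃ A B D : k, A ^ 3 = u ∧ B ^ 3 = v ∧ D ^ 3 = t ∧ A * B * D = a := by
  obtain ⟨B, hB⟩ := IsAlgClosed.exists_pow_nat_eq v (n := 3) (by norm_num)
  obtain ⟨D, hD⟩ := IsAlgClosed.exists_pow_nat_eq t (n := 3) (by norm_num)
  by_cases hBD : B * D = 0
  · obtain ⟨A, hA⟩ := IsAlgClosed.exists_pow_nat_eq u (n := 3) (by norm_num)
    have ha : a = 0 := by
      rw [← hB, ← hD, mul_assoc, ← mul_pow, hBD] at h
      simpa using h.symm
    exact ⟨A, B, D, hA, hB, hD, by rw [mul_assoc, hBD, mul_zero, ha]⟩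
  · refine ⟨a / (B * D), B, D, ?_, hB, hD, by rw [mul_assoc, div_mul_cancel₀ _ hBD]⟩
    have hvt : v * t ≠ 0 := by rw [← hB, ← hD, ← mul_pow]; exact pow_ne_zero 3 hBD
    rw [div_pow, mul_pow, hB, hD, ← h, mul_assoc, mul_div_cancel_right₀ _ hvt]

end IsAlgClosed

lemma MvPolynomial.aeval_injective_of_forall_exists_eval {K σ τ : Type*} [CommRing K]
    [IsDomain K] [Infinite K] {g : σ → MvPolynomial τ K}
    (h : ∀ x : σ → K, ∃ y : τ → K, ∀ i, eval y (g i) = x i) :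
    Function.Injective (aeval (R := K) g) := by
  intro p q hpq
  refine funext fun x => ?_
  obtain ⟨y, hy⟩ := h x
  have key : ∀ r, eval y (aeval g r) = eval x r := fun r => by
    rw [aeval_eq_bind₁, ← _root_.funext hy]
    exact eval₂Hom_bind₁ _ _ _ _
  rw [← key, ← key, hpq]

section LastVariable

variable (R : Type*) [CommSemiring R] (n : ℕ)

def lastVarEquiv : MvPolynomial (Fin (n + 1)) R ≃ₐ[R] Polynomial (MvPolynomial (Fin n) R) :=
  (renameEquiv R (finSuccEquiv' (Fin.last n))).trans (optionEquivLeft R (Fin n))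

variable {R n}

@[simp]
lemma lastVarEquiv_X_castSucc (i : Fin n) :
    lastVarEquiv R n (X i.castSucc) = Polynomial.C (X i) := by
  simp [lastVarEquiv, finSuccEquiv'_last_apply_castSucc, optionEquivLeft_X_some]

@[simp]
lemma lastVarEquiv_X_last : lastVarEquiv R n (X (Fin.last n)) = Polynomial.X := by
  simp [lastVarEquiv, optionEquivLeft_X_none]

@[simp]
lemma lastVarEquiv_C (r : R) : lastVarEquiv R n (C r) = Polynomial.C (C r) := by
  simp [lastVarEquiv, optionEquivLeft_C]

lemma aevalTower_comp_lastVarEquiv {S : Type*} [CommSemiring S] [Algebra R S]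
    (f : Fin (n + 1) → S) :
    (Polynomial.aevalTower (aeval (Fin.init f)) (f (Fin.last n))).comp
      (lastVarEquiv R n).toAlgHom = aeval f := by
  refine algHom_ext fun i => ?_
  induction i using Fin.lastCases <;> simp [Fin.init]

end LastVariable

lemma Polynomial.ker_eq_span_singleton_of_monic {R S G : Type*} [CommRing R] [Semiring S]
    [FunLike G (Polynomial R) S] [RingHomClass G (Polynomial R) S] (φ : G) {F : Polynomial R}
    (hF : F.Monic) (hφF : φ F = 0) (hφ : ∀ r, r.degree < F.degree → φ r = 0 → r = 0) :
    RingHom.ker φ = Ideal.span {F} := by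
  refine le_antisymm (fun p hp => ?_) (by simpa [Ideal.span_le] using hφF)
  nontriviality R
  have hφmod : φ (p %ₘ F) = 0 := by
    have h := congrArg φ (modByMonic_add_div p F)
    rwa [map_add, map_mul, hφF, zero_mul, add_zero, RingHom.mem_ker.1 hp] at h
  rw [Ideal.mem_span_singleton, ← modByMonic_eq_zero_iff_dvd hF]
  exact hφ _ (degree_modByMonic_lt p hF) hφmod

lemma eq_zero_of_mul_add_eq_zero_of_map {S G : Type*} [CommRing S] [IsDomain S] [FunLike G S S]
    [RingHomClass G S S] (σ : G) {a b t : S} (ha : σ a = a) (hb : σ b = b) (ht : σ t ≠ t)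
    (h : a * t + b = 0) : a = 0 ∧ b = 0 := by
  have hσ : a * σ t + b = 0 := by simpa [ha, hb] using congrArg σ h
  have ha0 : a = 0 :=
    (mul_eq_zero.1 (by linear_combination h - hσ : a * (t - σ t) = 0)).resolve_right
      (sub_ne_zero.2 ht.symm)
  exact ⟨ha0, by simpa [ha0] using h⟩

lemma isPrimitiveRoot_ω : IsPrimitiveRoot ω 3 := by
  simpa [ω] using Complex.isPrimitiveRoot_exp 3 (by norm_num)

lemma ω_sq_add_ω_add_one : ω ^ 2 + ω + 1 = 0 := by
  have h := isPrimitiveRoot_ω.geom_sum_eq_zero (by norm_num)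
  simp only [Finset.sum_range_succ, Finset.sum_range_zero] at h
  linear_combination h

lemma aeval_fvec_Frel : aeval fvec Frel = 0 := by
  have hω : (C ω : MvPolynomial (Fin 3) ℂ) ^ 2 + C ω + 1 = 0 := by
    simpa using congrArg (C : ℂ → MvPolynomial (Fin 3) ℂ) ω_sq_add_ω_add_one
  simp only [Frel, fvec, map_add, map_sub, map_mul, map_pow, aeval_X, map_ofNat,
    Matrix.cons_val]
  linear_combination (X 0 ^ 3 + C ω * X 1 ^ 3 + C ω ^ 2 * X 2 ^ 3) ^ 3 *
    cube_sum_identity hω (X 0 ^ 3) (X 1 ^ 3) (X 2 ^ 3)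

lemma exists_eval_init_fvec_eq (x : Fin 3 → ℂ) :
    ∃ y : Fin 3 → ℂ, ∀ i, eval y (Fin.init fvec i) = x i := by
  -- With `u, v, t = X³, Y³, Z³`, the third coordinate is `(u + v + t)² - 3(uv + ut + vt)`.
  obtain ⟨u, v, t, hs₁, hs₂, hs₃⟩ :=
    IsAlgClosed.exists_esymm_eq (x 1) ((x 1 ^ 2 - x 2) / 3) (x 0 ^ 3)
  obtain ⟨A, B, D, rfl, rfl, rfl, hABD⟩ := IsAlgClosed.exists_cube_roots_mul_eq hs₃
  refine ⟨![A, B, D], fun i => ?_⟩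
  fin_cases i <;>
    simp only [Fin.init, fvec, Fin.isValue, Fin.reduceFinMk, Fin.reduceCastSucc,
      Matrix.cons_val, Matrix.cons_val_zero, Matrix.cons_val_one, map_mul, map_add, map_pow, eval_X,
      eval_C]
  · exact hABD
  · exact hs₁
  · rw [mul_conj_eq_of_sq_add_self_add_one ω_sq_add_ω_add_one]
    linear_combination (A ^ 3 + B ^ 3 + D ^ 3 + x 1) * hs₁ - 3 * hs₂

lemma lastVarEquiv_Frel :
    lastVarEquiv ℂ 3 Frel = Polynomial.X ^ 2
      + Polynomial.C (X 1 ^ 3 - C 3 * X 2 * X 1 - C 27 * X 0 ^ 3) * Polynomial.X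
      + Polynomial.C (X 2 ^ 3) := by
  have h0 : (X 0 : MvPolynomial (Fin 4) ℂ) = X (Fin.castSucc 0) := rfl
  have h1 : (X 1 : MvPolynomial (Fin 4) ℂ) = X (Fin.castSucc 1) := rfl
  have h2 : (X 2 : MvPolynomial (Fin 4) ℂ) = X (Fin.castSucc 2) := rfl
  have h3 : (X 3 : MvPolynomial (Fin 4) ℂ) = X (Fin.last 3) := rfl
  simp only [Frel, h0, h1, h2, h3, map_add, map_sub, map_mul, map_pow, lastVarEquiv_X_castSucc,
    lastVarEquiv_X_last, lastVarEquiv_C]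
  ring

lemma monic_lastVarEquiv_Frel : (lastVarEquiv ℂ 3 Frel).Monic := by
  rw [lastVarEquiv_Frel]; monicity!

lemma degree_lastVarEquiv_Frel : (lastVarEquiv ℂ 3 Frel).degree = 2 := by
  rw [lastVarEquiv_Frel]; compute_degree!

lemma aeval_init_fvec_injective : Function.Injective (aeval (R := ℂ) (Fin.init fvec)) :=
  aeval_injective_of_forall_exists_eval exists_eval_init_fvec_eq

lemma rename_swap_aeval_init_fvec (q : MvPolynomial (Fin 3) ℂ) :
    rename (Equiv.swap 1 2) (aeval (Fin.init fvec) q) = aeval (Fin.init fvec) q := by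
  rw [← AlgHom.comp_apply, comp_aeval]
  congr 2
  funext i
  fin_cases i <;>
    simp only [Fin.init, fvec, Fin.isValue, Fin.reduceFinMk, Fin.reduceCastSucc, Matrix.cons_val,
      Matrix.cons_val_zero, Matrix.cons_val_one, map_mul, map_add, map_pow, rename_X, algHom_C,
      algebraMap_eq, ne_eq, Fin.reduceEq, not_false_eq_true, Equiv.swap_apply_of_ne_of_ne,
      Equiv.swap_apply_left, Equiv.swap_apply_right] <;>
    ring

lemma rename_swap_fvec_last_ne :
    rename (Equiv.swap 1 2) (fvec (Fin.last 3)) ≠ fvec (Fin.last 3) := by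
  intro h
  have hω₀ : ω ≠ 0 := isPrimitiveRoot_ω.ne_zero (by norm_num)
  have hω₁ : ω ≠ 1 := isPrimitiveRoot_ω.ne_one (by norm_num)
  -- At `(0, 1, -1)` the two sides are `(ω² - ω)³` and `(ω - ω²)³`.
  have h' := congrArg (eval ![0, 1, -1]) h
  simp only [fvec, Fin.isValue, Fin.reduceLast, Matrix.cons_val, map_pow, map_add,
    map_mul, rename_X, algHom_C, algebraMap_eq, ne_eq, Fin.reduceEq, not_false_eq_true,
    Equiv.swap_apply_of_ne_of_ne, Equiv.swap_apply_left, Equiv.swap_apply_right,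
    eval_X, eval_C, Matrix.cons_val_zero, Matrix.cons_val_one] at h'
  have hcube : (ω - ω ^ 2) ^ 3 = 0 := by linear_combination -h' / 2
  have : ω * (1 - ω) = 0 := by linear_combination (pow_eq_zero_iff (n := 3) (by norm_num)).1 hcube
  simp [hω₀, sub_eq_zero, hω₁.symm] at this

def phiStarTower : Polynomial (MvPolynomial (Fin 3) ℂ) →ₐ[ℂ] MvPolynomial (Fin 3) ℂ :=
  Polynomial.aevalTower (aeval (Fin.init fvec)) (fvec (Fin.last 3))

lemma phiStarTower_lastVarEquiv (p : MvPolynomial (Fin 4) ℂ) :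
    phiStarTower (lastVarEquiv ℂ 3 p) = aeval fvec p :=
  DFunLike.congr_fun (aevalTower_comp_lastVarEquiv fvec) p

lemma ker_phiStarTower : RingHom.ker phiStarTower = Ideal.span {lastVarEquiv ℂ 3 Frel} := by
  refine Polynomial.ker_eq_span_singleton_of_monic _ monic_lastVarEquiv_Frel
    (by rw [phiStarTower_lastVarEquiv, aeval_fvec_Frel]) fun r hr hφr => ?_
  rw [degree_lastVarEquiv_Frel] at hr
  have hr1 : r.degree ≤ 1 := Order.le_of_lt_succ hr
  rw [Polynomial.eq_X_add_C_of_degree_le_one hr1] at hφr ⊢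
  simp only [phiStarTower, map_add, map_mul, Polynomial.aevalTower_C,
    Polynomial.aevalTower_X] at hφr
  obtain ⟨h1, h0⟩ := eq_zero_of_mul_add_eq_zero_of_map (rename (Equiv.swap 1 2))
    (rename_swap_aeval_init_fvec _) (rename_swap_aeval_init_fvec _) rename_swap_fvec_last_ne hφr
  rw [(injective_iff_map_eq_zero _).1 aeval_init_fvec_injective _ h1,
    (injective_iff_map_eq_zero _).1 aeval_init_fvec_injective _ h0]
  simp

/-- The kernel of the substitution homomorphism φ* : ℂ[x,z,y,w] → ℂ[X,Y,Z] is exactly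
the principal ideal generated by w² + y³ − 27wx³ − 3wyz + wz³. -/
theorem ker_phi_star :
    RingHom.ker (aeval fvec : MvPolynomial (Fin 4) ℂ →ₐ[ℂ] MvPolynomial (Fin 3) ℂ) =
      Ideal.span {Frel} := by
  ext p
  rw [RingHom.mem_ker, ← phiStarTower_lastVarEquiv, ← RingHom.mem_ker, ker_phiStarTower,
    Ideal.mem_span_singleton, Ideal.mem_span_singleton, map_dvd_iff]
end
end

section
/- For every natural number m, the number of quadruples (a,b,c,d) with a,b,c natural numbers and d ∈ {0,1} satisfying 3a + 3b + 6c + 9d = 3m equals 1 + m(m+1)/2; moreover, for any natural number n not divisible by 3 there are no such quadruples with 3a + 3b + 6c + 9d = n. (Equivalently: the graded piece of degree n of the ring ℂ[x,z,y,w]/(w² + y³ − 27wx³ − 3wyz + wz³), graded by deg(xᵃzᵇyᶜwᵈ) = 3a+3b+6c+9d, has ℂ-dimension 0 if 3∤n and 1 + m(m+1)/2 if n = 3m.) -/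
/-!
Dividing the grading by 3, the monomials of degree `3m` are the quadruples with `d ≤ 1` and
`a + b + 2c + 3d = m`. Every `n ≠ 1` is `2c + 3d` for exactly one pair with `d ≤ 1` (namely
`d = n % 2`), and `1` is not, so such a quadruple amounts to a pair `(n, a)` with `n ≠ 1` and
`a + n ≤ m`. There are `∑_{n ≤ m} (m + 1 - n) - m = (m + 1)(m + 2)/2 - m = 1 + m(m + 1)/2` of them.
-/

open Finset

lemma sum_erase_one_range_sub (m : ℕ) :
    ∑ n ∈ (range (m + 1)).erase 1, (m + 1 - n) = 1 + m * (m + 1) / 2 := by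
  rcases Nat.eq_zero_or_pos m with rfl | hm
  · rfl
  have h_reflect : ∑ n ∈ range (m + 2), n = ∑ n ∈ range (m + 1), (m + 1 - n) := by
    rw [sum_range_succ', ← sum_range_reflect, add_zero]
    exact sum_congr rfl fun n hn => by have := mem_range.1 hn; omega
  have h_gauss : ∑ n ∈ range (m + 2), n = m * (m + 1) / 2 + (m + 1) := by
    rw [sum_range_id, show (m + 2) * (m + 2 - 1) = m * (m + 1) + (m + 1) * 2 by simp; ring,
      Nat.add_mul_div_right _ _ two_pos]
  have := sum_erase_add _ (fun n => m + 1 - n) (mem_range.2 (by omega : 1 < m + 1))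
  omega

lemma ncard_weighted_quadruples_eq_card_sigma (m : ℕ) :
    Set.ncard {q : ℕ × ℕ × ℕ × ℕ |
        q.2.2.2 ≤ 1 ∧ q.1 + q.2.1 + 2 * q.2.2.1 + 3 * q.2.2.2 = m} =
      (((range (m + 1)).erase 1).sigma fun n => range (m + 1 - n)).card := by
  rw [← Set.ncard_coe_finset]
  refine Set.ncard_congr (fun q _ => ⟨2 * q.2.2.1 + 3 * q.2.2.2, q.1⟩) ?_ ?_ ?_
  · rintro ⟨a, b, c, d⟩ ⟨hd, h⟩
    dsimp only at hd h
    simp only [mem_coe, mem_sigma, mem_erase, mem_range]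
    omega
  · rintro ⟨a, b, c, d⟩ ⟨a', b', c', d'⟩ ⟨hd, h⟩ ⟨hd', h'⟩ heq
    dsimp only at hd h hd' h'
    simp only [Sigma.mk.injEq, heq_eq_eq] at heq
    simp only [Prod.mk.injEq]
    omega
  · rintro ⟨n, a⟩ hna
    simp only [mem_coe, mem_sigma, mem_erase, mem_range] at hna
    refine ⟨(a, m - a - n, (n - 3 * (n % 2)) / 2, n % 2), ⟨by dsimp only; omega, ?_⟩, ?_⟩
    · dsimp only
      omega
    · simp only [Sigma.mk.injEq, heq_eq_eq, and_true]
      omega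

/-- In the grading deg(xᵃzᵇyᶜwᵈ) = 3a+3b+6c+9d of the quotient ring
ℂ[x,z,y,w]/(w²+y³−27wx³−3wyz+wz³) (whose monomial basis has d ∈ {0,1}):
the degree-3m piece has dimension 1 + m(m+1)/2, and the pieces of degree
not divisible by 3 are zero. -/
theorem count_graded_monomials :
    (∀ m : ℕ,
      Set.ncard {q : ℕ × ℕ × ℕ × ℕ |
          q.2.2.2 ≤ 1 ∧ 3 * q.1 + 3 * q.2.1 + 6 * q.2.2.1 + 9 * q.2.2.2 = 3 * m} =
        1 + m * (m + 1) / 2) ∧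
    (∀ n : ℕ, ¬ (3 ∣ n) →
      ∀ a b c d : ℕ, d ≤ 1 → 3 * a + 3 * b + 6 * c + 9 * d ≠ n) := by
  refine ⟨fun m => ?_, fun n hn a b c d _ h => hn ⟨a + b + 2 * c + 3 * d, by omega⟩⟩
  have h_weight : {q : ℕ × ℕ × ℕ × ℕ |
        q.2.2.2 ≤ 1 ∧ 3 * q.1 + 3 * q.2.1 + 6 * q.2.2.1 + 9 * q.2.2.2 = 3 * m} =
      {q | q.2.2.2 ≤ 1 ∧ q.1 + q.2.1 + 2 * q.2.2.1 + 3 * q.2.2.2 = m} := by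
    ext q
    simp only [Set.mem_ofPred_eq]
    omega
  rw [h_weight, ncard_weighted_quadruples_eq_card_sigma, card_sigma, ← sum_erase_one_range_sub]
  simp only [card_range]
end
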